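/- There exists an infinite set S of pairs (d,e) of integers such that for any two distinct pairs (d,e) and (d̃,ẽ) in S there is no ℚ-algebra isomorphism from ℚ[x,y]/(x³, y·(y + d̃·x)·(y + ẽ·x)) to ℚ[x,y]/(x³, y·(y + d·x)·(y + e·x)) mapping the ℚ-span of the classes of x and y onto the ℚ-span of the classes of x and y. (One may take pairs (d,e) for which d² − d·e + e² runs over distinct primes congruent to 1 modulo 3.) -/
import Mathlib
set_option maxHeartbeats 1000000


noncomputable section

open MvPolynomial

/-- The relations ideal for `ℚ[x,y]/(x³, y·(y+d·x)·(y+e·x))`. -/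
def Qrel (d e : ℤ) : Ideal (MvPolynomial (Fin 2) ℚ) :=
  Ideal.span {X 0 ^ 3, X 1 * (X 1 + (d : ℚ) • X 0) * (X 1 + (e : ℚ) • X 0)}

/-- `QR d e = ℚ[x,y]/(x³, y·(y+d·x)·(y+e·x))`. -/
abbrev QR (d e : ℤ) := MvPolynomial (Fin 2) ℚ ⧸ Qrel d e

/-- The class of `x` in `QR d e`. -/
def qx (d e : ℤ) : QR d e := Ideal.Quotient.mk (Qrel d e) (X 0)

/-- The class of `y` in `QR d e`. -/
def qy (d e : ℤ) : QR d e := Ideal.Quotient.mk (Qrel d e) (X 1)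

/-- The `ℚ`-span of the classes of `x` and `y` (the degree-2 part). -/
def qdeg2 (d e : ℤ) : Submodule ℚ (QR d e) := Submodule.span ℚ {qx d e, qy d e}


-- cube root of unity mod p
lemma cube_root (p : ℕ) [Fact p.Prime] (h3 : p % 3 = 1) :
    ∃ u : ZMod p, u ^ 2 + u + 1 = 0 := by
  have hp : p.Prime := Fact.out
  obtain ⟨g, hg⟩ := IsCyclic.exists_ofOrder_eq_natCard (α := (ZMod p)ˣ)
  have hcard : Nat.card (ZMod p)ˣ = p - 1 := by
    simp [Nat.card_eq_fintype_card, ZMod.card_units_eq_totient, Nat.totient_prime hp]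
  rw [hcard] at hg
  have h2 := hp.two_le
  have hple : 7 ≤ p := by
    by_contra h
    push_neg at h
    interval_cases p <;> first | omega | exact absurd hp (by decide)
  set ζ := g ^ ((p - 1) / 3) with hζ
  have hζ3 : ζ ^ 3 = 1 := by
    rw [hζ, ← pow_mul]
    have : (p - 1) / 3 * 3 = p - 1 := Nat.div_mul_cancel (by omega)
    rw [this, ← hg, pow_orderOf_eq_one]
  have hζne : ζ ≠ 1 := by
    intro hcon
    have := orderOf_dvd_of_pow_eq_one (n := (p - 1) / 3) (x := g) hcon
    rw [hg] at this
    have := Nat.le_of_dvd (by omega) this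
    omega
  refine ⟨(ζ : ZMod p), ?_⟩
  have h1 : ((ζ : ZMod p) - 1) * ((ζ : ZMod p) ^ 2 + (ζ : ZMod p) + 1) = 0 := by
    have : ((ζ : ZMod p)) ^ 3 = 1 := by
      rw [← Units.val_pow_eq_pow_val, hζ3, Units.val_one]
    linear_combination this
  rcases mul_eq_zero.1 h1 with h | h
  · exfalso
    apply hζne
    have : (ζ : ZMod p) = 1 := by linear_combination h
    exact Units.ext (by simpa using this)
  · exact h

lemma rep_prime (p : ℕ) (hp : p.Prime) (h3 : p % 3 = 1) :
    ∃ d e : ℤ, d ^ 2 - d * e + e ^ 2 = (p : ℤ) := by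
  haveI : Fact p.Prime := ⟨hp⟩
  obtain ⟨u, hu⟩ := cube_root p h3
  set k := Nat.sqrt p with hk
  -- pigeonhole
  have hcard : Fintype.card (ZMod p) < Fintype.card (Fin (k + 1) × Fin (k + 1)) := by
    simp only [ZMod.card, Fintype.card_prod, Fintype.card_fin]
    have := Nat.lt_succ_sqrt p
    nlinarith [Nat.sqrt_le p]
  obtain ⟨x, y, hxy, hF⟩ := Fintype.exists_ne_map_eq_of_card_lt
    (fun z : Fin (k + 1) × Fin (k + 1) => ((z.1 : ℕ) : ZMod p) - u * ((z.2 : ℕ) : ZMod p))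
    hcard
  set A : ℤ := (x.1 : ℕ) - ((y.1 : ℕ) : ℤ) with hA
  set B : ℤ := (x.2 : ℕ) - ((y.2 : ℕ) : ℤ) with hB
  have hAB : ¬(A = 0 ∧ B = 0) := by
    rintro ⟨h1, h2⟩
    apply hxy
    have e1 : (x.1 : ℕ) = (y.1 : ℕ) := by omega
    have e2 : (x.2 : ℕ) = (y.2 : ℕ) := by omega
    exact Prod.ext (Fin.ext e1) (Fin.ext e2)
  have hAk : A ^ 2 ≤ (k : ℤ) ^ 2 := by
    have := x.1.isLt; have := y.1.isLt
    have : A ≤ k := by omega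
    have : -(k : ℤ) ≤ A := by omega
    nlinarith
  have hBk : B ^ 2 ≤ (k : ℤ) ^ 2 := by
    have := x.2.isLt; have := y.2.isLt
    have : B ≤ k := by omega
    have : -(k : ℤ) ≤ B := by omega
    nlinarith
  -- congruence A ≡ u B
  have hcong : ((A : ZMod p)) = u * (B : ZMod p) := by
    have : ((x.1 : ℕ) : ZMod p) - u * ((x.2 : ℕ) : ZMod p)
        = ((y.1 : ℕ) : ZMod p) - u * ((y.2 : ℕ) : ZMod p) := hF
    push_cast [hA, hB]
    linear_combination this
  set m : ℤ := A ^ 2 + A * B + B ^ 2 with hm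
  have hdvd : (p : ℤ) ∣ m := by
    have : ((m : ℤ) : ZMod p) = 0 := by
      push_cast [hm]
      rw [hcong]
      linear_combination (B : ZMod p) ^ 2 * hu
    exact (ZMod.intCast_zmod_eq_zero_iff_dvd m p).1 this
  have hmpos : 0 < m := by
    rcases lt_trichotomy B 0 with hB0 | hB0 | hB0
    · nlinarith [sq_nonneg (2 * A + B)]
    · have hA0 : A ≠ 0 := fun h => hAB ⟨h, hB0⟩
      have : 0 < A ^ 2 := by positivity
      rw [hm, hB0]; nlinarith
    · nlinarith [sq_nonneg (2 * A + B)]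
  have hklt : (k : ℤ) ^ 2 < p := by
    have h1 : k * k ≤ p := Nat.sqrt_le p
    have h2 : k * k ≠ p := by
      intro h
      have h2le := hp.two_le
      rcases hp.eq_one_or_self_of_dvd k ⟨k, h.symm⟩ with hk1 | hk1
      · rw [hk1] at h; omega
      · rw [hk1] at h; nlinarith
    push_cast
    nlinarith [lt_of_le_of_ne h1 h2]
  have hmlt : m < 3 * p := by
    have hAB2 : 2 * (A * B) ≤ A ^ 2 + B ^ 2 := by nlinarith [sq_nonneg (A - B)]
    nlinarith
  -- m = p or 2p
  obtain ⟨t, ht⟩ := hdvd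
  have hppos : (0 : ℤ) < p := by exact_mod_cast hp.pos
  have hodd : p % 2 = 1 := by
    rcases hp.eq_two_or_odd with h | h
    · omega
    · exact h
  have ht0 : 0 < t := by nlinarith
  have ht3 : t < 3 := by nlinarith
  interval_cases t
  · exact ⟨A, -B, by rw [hm] at ht; linear_combination ht⟩
  · exfalso
    have hoddZ : (p : ℤ) % 2 = 1 := by omega
    have hm2 : A ^ 2 + A * B + B ^ 2 = (p : ℤ) * 2 := by rw [← hm]; exact ht
    rcases Int.even_or_odd A with ⟨a1, ha1⟩ | ⟨a1, ha1⟩ <;>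
      rcases Int.even_or_odd B with ⟨b1, hb1⟩ | ⟨b1, hb1⟩
    · have hw : A ^ 2 + A * B + B ^ 2 = 4 * (a1 ^ 2 + a1 * b1 + b1 ^ 2) := by
        rw [ha1, hb1]; ring
      omega
    · have hw : A ^ 2 + A * B + B ^ 2
          = 2 * (2 * a1 ^ 2 + 2 * a1 * b1 + a1 + 2 * b1 ^ 2 + 2 * b1) + 1 := by
        rw [ha1, hb1]; ring
      omega
    · have hw : A ^ 2 + A * B + B ^ 2
          = 2 * (2 * a1 ^ 2 + 2 * a1 + (2 * a1 + 1) * b1 + 2 * b1 ^ 2) + 1 := by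
        rw [ha1, hb1]; ring
      omega
    · have hw : A ^ 2 + A * B + B ^ 2
          = 2 * (2 * a1 ^ 2 + 2 * a1 * b1 + 2 * b1 ^ 2 + 3 * a1 + 3 * b1 + 1) + 1 := by
        rw [ha1, hb1]; ring
      omega

/-- exponent vector x^i y^j -/
def mm (i j : ℕ) : Fin 2 →₀ ℕ := Finsupp.single 0 i + Finsupp.single 1 j

lemma mm_apply0 (i j : ℕ) : mm i j 0 = i := by simp [mm]
lemma mm_apply1 (i j : ℕ) : mm i j 1 = j := by simp [mm]

lemma mm_le (i j a b : ℕ) : mm i j ≤ mm a b ↔ i ≤ a ∧ j ≤ b := by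
  constructor
  · intro h
    refine ⟨?_, ?_⟩
    · have := h 0; simpa [mm_apply0] using this
    · have := h 1; simpa [mm_apply1] using this
  · intro ⟨h1, h2⟩ t
    fin_cases t <;> simpa [mm_apply0, mm_apply1]

lemma mm_eq (i j a b : ℕ) : mm i j = mm a b ↔ i = a ∧ j = b := by
  constructor
  · intro h
    exact ⟨by rw [← mm_apply0 i j, h, mm_apply0], by rw [← mm_apply1 i j, h, mm_apply1]⟩
  · rintro ⟨rfl, rfl⟩; rfl

lemma XX_eq_monomial (i j : ℕ) :
    (X 0 ^ i * X 1 ^ j : MvPolynomial (Fin 2) ℚ) = monomial (mm i j) 1 := by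
  rw [X_pow_eq_monomial, X_pow_eq_monomial, monomial_mul, one_mul]
  rfl

lemma coeff_mul_XX (v : MvPolynomial (Fin 2) ℚ) (r : ℚ) (i j a b : ℕ) :
    coeff (mm a b) (v * (C r * (X 0 ^ i * X 1 ^ j)))
      = if i ≤ a ∧ j ≤ b then coeff (mm a b - mm i j) v * r else 0 := by
  rw [XX_eq_monomial, C_mul_monomial, mul_one, coeff_mul_monomial']
  simp only [mm_le]

lemma rel_nf (d e : ℤ) :
    (X 1 * (X 1 + (d : ℚ) • X 0) * (X 1 + (e : ℚ) • X 0) : MvPolynomial (Fin 2) ℚ)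
      = C 1 * (X 0 ^ 0 * X 1 ^ 3) + C ((d : ℚ) + (e : ℚ)) * (X 0 ^ 1 * X 1 ^ 2)
        + C ((d : ℚ) * (e : ℚ)) * (X 0 ^ 2 * X 1 ^ 1) := by
  simp only [smul_eq_C_mul, map_add, map_mul, map_one]
  ring

lemma mem_Qrel_coeff {d e : ℤ} {g : MvPolynomial (Fin 2) ℚ} (hg : g ∈ Qrel d e) :
    coeff (mm 1 2) g = ((d : ℚ) + e) * coeff (mm 0 3) g ∧
    coeff (mm 2 1) g = ((d : ℚ) * e) * coeff (mm 0 3) g ∧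
    coeff (mm 1 0) g = 0 ∧ coeff (mm 0 1) g = 0 := by
  rw [Qrel, Ideal.mem_span_pair] at hg
  obtain ⟨u, v, huv⟩ := hg
  have hx3 : (X 0 ^ 3 : MvPolynomial (Fin 2) ℚ) = C 1 * (X 0 ^ 3 * X 1 ^ 0) := by
    rw [C_1, one_mul, pow_zero, mul_one]
  rw [rel_nf, hx3] at huv
  have hco : ∀ a b : ℕ, coeff (mm a b) g
      = (if 3 ≤ a ∧ 0 ≤ b then coeff (mm a b - mm 3 0) u * 1 else 0)
      + ((if 0 ≤ a ∧ 3 ≤ b then coeff (mm a b - mm 0 3) v * 1 else 0)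
      + ((if 1 ≤ a ∧ 2 ≤ b then coeff (mm a b - mm 1 2) v * ((d : ℚ) + e) else 0)
      + (if 2 ≤ a ∧ 1 ≤ b then coeff (mm a b - mm 2 1) v * ((d : ℚ) * e) else 0))) := by
    intro a b
    rw [← huv, mul_add, mul_add]
    rw [coeff_add, coeff_add, coeff_add, coeff_mul_XX, coeff_mul_XX, coeff_mul_XX,
      coeff_mul_XX]
    ring
  rw [hco 1 2, hco 2 1, hco 0 3, hco 1 0, hco 0 1]
  norm_num [tsub_self]
  ring_nf
  simp [mul_comm]

lemma coeff_CXX (w : ℚ) (i j a b : ℕ) :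
    coeff (mm a b) (C w * (X 0 ^ i * X 1 ^ j)) = if i = a ∧ j = b then w else 0 := by
  rw [XX_eq_monomial, C_mul_monomial, mul_one, coeff_monomial]
  simp only [mm_eq]

lemma mk_smul (d e : ℤ) (w : ℚ) (P : MvPolynomial (Fin 2) ℚ) :
    Ideal.Quotient.mk (Qrel d e) (w • P) = w • Ideal.Quotient.mk (Qrel d e) P := by
  exact map_smul (Ideal.Quotient.mkₐ ℚ (Qrel d e)) w P

lemma indep (d e : ℤ) {α β : ℚ} (h : α • qx d e + β • qy d e = 0) : α = 0 ∧ β = 0 := by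
  have hmem : (α • X 0 + β • X 1 : MvPolynomial (Fin 2) ℚ) ∈ Qrel d e := by
    rw [← Ideal.Quotient.eq_zero_iff_mem, map_add, mk_smul, mk_smul]
    exact h
  obtain ⟨-, -, h1, h2⟩ := mem_Qrel_coeff hmem
  have hnf : (α • X 0 + β • X 1 : MvPolynomial (Fin 2) ℚ)
      = C α * (X 0 ^ 1 * X 1 ^ 0) + C β * (X 0 ^ 0 * X 1 ^ 1) := by
    simp only [smul_eq_C_mul]; ring
  simp only [hnf, coeff_add, coeff_CXX] at h1 h2
  norm_num at h1 h2
  exact ⟨h1, h2⟩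

lemma prime_square_class {P Q : ℕ} (hP : P.Prime) (hQ : Q.Prime) {a f : ℚ}
    (ha : a ≠ 0) (hf : f ≠ 0) (h : f ^ 2 * P = a ^ 2 * Q) : P = Q := by
  set r : ℚ := f / a with hr
  have hrP : r ^ 2 * P = Q := by
    rw [hr]; field_simp; linear_combination h
  have hden : ((r.den : ℚ)) ≠ 0 := by
    exact_mod_cast r.den_nz
  have hnum : (r.num : ℤ) ^ 2 * P = Q * (r.den : ℤ) ^ 2 := by
    have h2 : ((r.num : ℚ) / (r.den : ℚ)) = r := Rat.num_div_den r
    have h3 : ((r.num : ℚ)) ^ 2 * P = Q * (r.den : ℚ) ^ 2 := by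
      rw [← h2] at hrP
      field_simp at hrP
      linear_combination hrP
    exact_mod_cast h3
  have hPz : Prime (P : ℤ) := Nat.prime_iff_prime_int.1 hP
  have hdvd : (P : ℤ) ∣ (Q : ℤ) * (r.den : ℤ) ^ 2 := ⟨(r.num) ^ 2, by linear_combination -hnum⟩
  rcases hPz.dvd_mul.1 hdvd with hd | hd
  · have : P ∣ Q := by exact_mod_cast hd
    exact (Nat.prime_dvd_prime_iff_eq hP hQ).1 this
  · exfalso
    have hPd : (P : ℤ) ∣ (r.den : ℤ) := hPz.dvd_of_dvd_pow hd
    obtain ⟨k, hk⟩ := hPd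
    have hP0 : (P : ℤ) ≠ 0 := by exact_mod_cast hP.ne_zero
    have h5 : (r.num) ^ 2 = Q * P * k ^ 2 := by
      apply mul_right_cancel₀ hP0
      rw [hk] at hnum
      linear_combination hnum
    have hPn : (P : ℤ) ∣ r.num := hPz.dvd_of_dvd_pow (n := 2) ⟨Q * k ^ 2, by linear_combination h5⟩
    have hn : P ∣ r.num.natAbs := Int.natCast_dvd_natCast.1 (Int.dvd_natAbs.2 hPn)
    have hdn : P ∣ r.den := Int.natCast_dvd_natCast.1 ⟨k, hk⟩
    have := Nat.dvd_gcd hn hdn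
    rw [Nat.Coprime.gcd_eq_one r.reduced] at this
    exact hP.one_lt.ne' (Nat.dvd_one.1 this)

lemma key (d e d' e' : ℤ) (P Q : ℕ) (hP : P.Prime) (hQ : Q.Prime) (hPQ : P ≠ Q)
    (hNP : d ^ 2 - d * e + e ^ 2 = (P : ℤ)) (hNQ : d' ^ 2 - d' * e' + e' ^ 2 = (Q : ℤ)) :
    ¬ ∃ φ : QR d' e' ≃ₐ[ℚ] QR d e,
        Submodule.map φ.toLinearMap (qdeg2 d' e') = qdeg2 d e := by
  rintro ⟨φ, hspan⟩
  have hP' : ((d : ℚ)) ^ 2 - d * e + e ^ 2 = (P : ℚ) := by exact_mod_cast hNP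
  have hQ' : ((d' : ℚ)) ^ 2 - d' * e' + e' ^ 2 = (Q : ℚ) := by exact_mod_cast hNQ
  have hPne : (P : ℚ) ≠ 0 := by exact_mod_cast hP.ne_zero
  -- the images of x', y' lie in the span of x, y
  have hx'mem : φ (qx d' e') ∈ qdeg2 d e := by
    rw [← hspan]
    exact ⟨qx d' e', Submodule.subset_span (by simp), rfl⟩
  have hy'mem : φ (qy d' e') ∈ qdeg2 d e := by
    rw [← hspan]
    exact ⟨qy d' e', Submodule.subset_span (by simp), rfl⟩
  obtain ⟨a, b, hab⟩ := Submodule.mem_span_pair.1 hx'mem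
  obtain ⟨c, f, hcf⟩ := Submodule.mem_span_pair.1 hy'mem
  -- relations in the source ring
  have hx3 : (qx d' e') ^ 3 = 0 := by
    rw [qx, ← map_pow, Ideal.Quotient.eq_zero_iff_mem]
    exact Ideal.subset_span (Set.mem_insert _ _)
  have hyrel : qy d' e' * (qy d' e' + (d' : ℚ) • qx d' e')
      * (qy d' e' + (e' : ℚ) • qx d' e') = 0 := by
    rw [qx, qy, ← mk_smul, ← mk_smul, ← map_add, ← map_add, ← map_mul, ← map_mul,
      Ideal.Quotient.eq_zero_iff_mem]
    exact Ideal.subset_span (Set.mem_insert_iff.2 (Or.inr rfl))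
  -- first relation transported
  have hmem1 : ((a • X 0 + b • X 1 : MvPolynomial (Fin 2) ℚ)) ^ 3 ∈ Qrel d e := by
    rw [← Ideal.Quotient.eq_zero_iff_mem, map_pow, map_add, mk_smul, mk_smul]
    show (a • qx d e + b • qy d e) ^ 3 = 0
    rw [hab, ← map_pow, hx3, map_zero]
  have hnf1 : ((a • X 0 + b • X 1 : MvPolynomial (Fin 2) ℚ)) ^ 3
      = C (a ^ 3) * (X 0 ^ 3 * X 1 ^ 0) + C (3 * a ^ 2 * b) * (X 0 ^ 2 * X 1 ^ 1)
        + C (3 * a * b ^ 2) * (X 0 ^ 1 * X 1 ^ 2) + C (b ^ 3) * (X 0 ^ 0 * X 1 ^ 3) := by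
    simp only [smul_eq_C_mul, map_mul, map_add, map_pow, map_ofNat]
    ring
  obtain ⟨c1, c2, -, -⟩ := mem_Qrel_coeff hmem1
  rw [hnf1] at c1 c2
  simp only [coeff_add, coeff_CXX] at c1 c2
  norm_num at c1 c2
  have hb : b = 0 := by
    by_contra hb
    have e1 : 3 * a = ((d : ℚ) + e) * b :=
      mul_right_cancel₀ (pow_ne_zero 2 hb) (by linear_combination c1)
    have e2 : 3 * a ^ 2 = ((d : ℚ) * e) * b ^ 2 :=
      mul_right_cancel₀ hb (by linear_combination c2)
    have hz : (((d : ℚ)) ^ 2 - d * e + e ^ 2) * b ^ 2 = 0 := by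
      linear_combination (-(3 * a) - ((d : ℚ) + e) * b) * e1 + 3 * e2
    rw [hP'] at hz
    rcases mul_eq_zero.1 hz with h | h
    · exact hPne h
    · exact hb ((pow_eq_zero_iff (n := 2) (by norm_num)).1 h)
  subst hb
  have hab0 : a • qx d e = φ (qx d' e') := by
    rw [← hab]; module
  have ha0 : a ≠ 0 := by
    intro h
    rw [h, zero_smul] at hab0
    have hx0 : qx d' e' = 0 := by
      apply φ.injective
      rw [← hab0, map_zero]
    have := (indep d' e' (α := 1) (β := 0) (by rw [hx0]; module)).1
    norm_num at this
  have hf0 : f ≠ 0 := by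
    intro h
    subst h
    have hy : qy d e ∈ qdeg2 d e := Submodule.subset_span (by simp)
    rw [← hspan] at hy
    obtain ⟨z, hz, hzy⟩ := hy
    obtain ⟨α, β, hαβ⟩ := Submodule.mem_span_pair.1 hz
    have hφz : (α * a + β * c) • qx d e = qy d e := by
      have h1 : φ z = qy d e := hzy
      rw [← hαβ, map_add, map_smul, map_smul, ← hab0, ← hcf] at h1
      rw [← h1]; module
    have := (indep d e (α := α * a + β * c) (β := -1)
      (by rw [hφz]; module)).2
    norm_num at this
  -- second relation transported
  have hrel2 : (c • qx d e + f • qy d e)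
      * ((c + (d' : ℚ) * a) • qx d e + f • qy d e)
      * ((c + (e' : ℚ) * a) • qx d e + f • qy d e) = 0 := by
    have h1 : φ (qy d' e' + (d' : ℚ) • qx d' e')
        = (c + (d' : ℚ) * a) • qx d e + f • qy d e := by
      rw [map_add, map_smul, ← hab0, ← hcf]; module
    have h2 : φ (qy d' e' + (e' : ℚ) • qx d' e')
        = (c + (e' : ℚ) * a) • qx d e + f • qy d e := by
      rw [map_add, map_smul, ← hab0, ← hcf]; module
    rw [← h1, ← h2, hcf, ← map_mul, ← map_mul, hyrel, map_zero]
  have hmem2 : ((c • X 0 + f • X 1) * ((c + (d' : ℚ) * a) • X 0 + f • X 1)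
      * ((c + (e' : ℚ) * a) • X 0 + f • X 1) : MvPolynomial (Fin 2) ℚ) ∈ Qrel d e := by
    rw [← Ideal.Quotient.eq_zero_iff_mem, map_mul, map_mul, map_add, map_add, map_add]
    simp only [mk_smul]
    exact hrel2
  have hnf2 : ((c • X 0 + f • X 1) * ((c + (d' : ℚ) * a) • X 0 + f • X 1)
      * ((c + (e' : ℚ) * a) • X 0 + f • X 1) : MvPolynomial (Fin 2) ℚ)
      = C (c * (c + (d' : ℚ) * a) * (c + (e' : ℚ) * a)) * (X 0 ^ 3 * X 1 ^ 0)
        + C ((c * (c + (d' : ℚ) * a) + c * (c + (e' : ℚ) * a)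
            + (c + (d' : ℚ) * a) * (c + (e' : ℚ) * a)) * f) * (X 0 ^ 2 * X 1 ^ 1)
        + C ((3 * c + ((d' : ℚ) + e') * a) * f ^ 2) * (X 0 ^ 1 * X 1 ^ 2)
        + C (f ^ 3) * (X 0 ^ 0 * X 1 ^ 3) := by
    simp only [smul_eq_C_mul, map_mul, map_add, map_pow, map_ofNat]
    ring
  obtain ⟨c3, c4, -, -⟩ := mem_Qrel_coeff hmem2
  rw [hnf2] at c3 c4
  simp only [coeff_add, coeff_CXX] at c3 c4
  norm_num at c3 c4
  have e1' : 3 * c + ((d' : ℚ) + e') * a = ((d : ℚ) + e) * f :=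
    mul_right_cancel₀ (pow_ne_zero 2 hf0) (by linear_combination c3)
  have e2' : c * (c + (d' : ℚ) * a) + c * (c + (e' : ℚ) * a)
      + (c + (d' : ℚ) * a) * (c + (e' : ℚ) * a) = ((d : ℚ) * e) * f ^ 2 :=
    mul_right_cancel₀ hf0 (by linear_combination c4)
  have hkey : f ^ 2 * (((d : ℚ)) ^ 2 - d * e + e ^ 2)
      = a ^ 2 * (((d' : ℚ)) ^ 2 - d' * e' + e' ^ 2) := by
    linear_combination (-(((d : ℚ) + e) * f) - 3 * c - ((d' : ℚ) + e') * a) * e1' + 3 * e2'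
  rw [hP', hQ'] at hkey
  exact hPQ (prime_square_class hP hQ ha0 hf0 hkey)


/-- There is an infinite set `S` of pairs `(d,e)` of integers such
that for any two distinct pairs in `S` there is no `ℚ`-algebra isomorphism between the
associated rings `ℚ[x,y]/(x³, y(y+dx)(y+ex))` mapping the span of `x, y` onto the span
of `x, y`. -/
theorem stmt12 :
    ∃ S : Set (ℤ × ℤ), S.Infinite ∧
      ∀ p ∈ S, ∀ q ∈ S, p ≠ q →
        ¬ ∃ φ : QR q.1 q.2 ≃ₐ[ℚ] QR p.1 p.2,
            Submodule.map φ.toLinearMap (qdeg2 q.1 q.2) = qdeg2 p.1 p.2 := by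
  have hT : Set.Infinite {p : ℕ | Nat.Prime p ∧ p ≡ 1 [MOD 3]} :=
    Nat.infinite_setOf_prime_modEq_one (by norm_num)
  set T := {p : ℕ | Nat.Prime p ∧ p ≡ 1 [MOD 3]} with hTdef
  have hrep : ∀ p : T, ∃ de : ℤ × ℤ, de.1 ^ 2 - de.1 * de.2 + de.2 ^ 2 = ((p : ℕ) : ℤ) := by
    rintro ⟨p, hp1, hp2⟩
    obtain ⟨d, e, hde⟩ := rep_prime p hp1 (by
      have := hp2; rw [Nat.ModEq] at this; omega)
    exact ⟨(d, e), hde⟩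
  choose G hG using hrep
  haveI : Infinite T := hT.to_subtype
  have hGinj : Function.Injective G := by
    intro p q h
    have : ((p : ℕ) : ℤ) = ((q : ℕ) : ℤ) := by rw [← hG p, ← hG q, h]
    exact Subtype.ext (by exact_mod_cast this)
  refine ⟨Set.range G, Set.infinite_range_of_injective hGinj, ?_⟩
  rintro de ⟨p, rfl⟩ de' ⟨q, rfl⟩ hne
  have hpq : (q : ℕ) ≠ (p : ℕ) := by
    intro h
    exact hne (congrArg G (Subtype.ext h)).symm
  exact key (G p).1 (G p).2 (G q).1 (G q).2 (p : ℕ) (q : ℕ) p.2.1 q.2.1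
    (fun h => hpq (h.symm)) (hG p) (hG q)
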